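/- For each k ≥ 1 and z ∈ ℂ, the function l_{z,k}(w) = ((k−1)!)^{−1/2} (w̄ − z̄)^{k−1} e^{w z̄ − |z|²/2} is a unit vector in L²(ℂ, μ), and l_{z,k} = (𝔸†)^{k−1} k_z where k_z(w) = e^{w z̄ − |z|²/2} and 𝔸† acts on the Fock space component by (1/√j)(−∂/∂z + z̄) on the j-th true polyanalytic component. In particular, applying (−∂/∂w + w̄) repeatedly: ((1/√(k−1))·(−∂/∂w + w̄)) l_{z,k−1} = l_{z,k}. -/

import Mathlib

open Complex MeasureTheory

/-- The Gaussian measure dμ(z) = π⁻¹ e^{-|z|²} dz on ℂ. -/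
noncomputable def gaussMeasure : Measure ℂ :=
  volume.withDensity fun z => ENNReal.ofReal (Real.exp (-‖z‖ ^ 2) / Real.pi)

/-- Wirtinger derivative ∂/∂z = (1/2)(∂/∂x − i ∂/∂y). -/
noncomputable def wdz (f : ℂ → ℂ) (z : ℂ) : ℂ :=
  (1/2 : ℂ) * (fderiv ℝ f z 1 - Complex.I * fderiv ℝ f z Complex.I)

/-- l_{z,k}(w) = ((k−1)!)^{−1/2} (w̄ − z̄)^{k−1} e^{w z̄ − |z|²/2}. -/
noncomputable def lKer (z : ℂ) (k : ℕ) : ℂ → ℂ := fun w =>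
  ((1 / Real.sqrt (Nat.factorial (k - 1)) : ℝ) : ℂ) *
    ((starRingEnd ℂ) w - (starRingEnd ℂ) z) ^ (k - 1) *
    Complex.exp (w * (starRingEnd ℂ) z - (‖z‖ ^ 2 : ℝ) / 2)

/-!
Write `l_{z,k}(w) = conj (c (w - z)^(k-1)) · k_z(w)` with `c = ((k-1)!)^(-1/2)` real and
`k_z(w) = e^{w z̄ - |z|²/2}` holomorphic, `k_z' = z̄ k_z`. The Wirtinger derivative kills the
antiholomorphic factor, so `-∂_w + w̄` acts on `l_{z,k}` as multiplication by `w̄ - z̄`, and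
`(k-1)! = (k-1) (k-2)!` accounts for the factor `1/√(k-1)`. For the norm,
`e^{-|w|²} |k_z(w)|² = e^{-|w - z|²}`, so after translating by `z` the integral is the Gamma
integral `∫ |v|^{2n} e^{-|v|²} dv = π n!`.
-/

open ComplexConjugate

theorem integral_gaussMeasure {E : Type*} [NormedAddCommGroup E] [NormedSpace ℝ E]
    (f : ℂ → E) :
    ∫ w, f w ∂gaussMeasure = ∫ w, (Real.exp (-‖w‖ ^ 2) / Real.pi) • f w := by
  rw [gaussMeasure, integral_withDensity_eq_integral_toReal_smul (by fun_prop)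
    (.of_forall fun _ => ENNReal.ofReal_lt_top)]
  congr with w
  rw [ENNReal.toReal_ofReal (by positivity)]

theorem integral_norm_pow_mul_exp_neg_sq_norm (n : ℕ) :
    ∫ v : ℂ, ‖v‖ ^ (2 * n) * Real.exp (-‖v‖ ^ 2) = Real.pi * n.factorial := by
  have h := Complex.integral_rpow_mul_exp_neg_rpow (p := 2) (q := (2 * n : ℕ)) one_le_two
    (lt_of_lt_of_le (by norm_num) (Nat.cast_nonneg _))
  simp only [Real.rpow_natCast, Real.rpow_two] at h
  rw [h, show (((2 * n : ℕ) : ℝ) + 2) / 2 = n + 1 by push_cast; ring,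
    Real.Gamma_nat_eq_factorial]
  ring

theorem exp_neg_sq_norm_mul_sq_norm_cexp (z w : ℂ) :
    Real.exp (-‖w‖ ^ 2) * ‖exp (w * conj z - (‖z‖ ^ 2 : ℝ) / 2)‖ ^ 2
      = Real.exp (-‖w - z‖ ^ 2) := by
  rw [norm_exp, ← Real.exp_nat_mul, ← Real.exp_add]
  congr 1
  simp only [Complex.sq_norm, normSq_apply, sub_re, sub_im, mul_re, conj_re, conj_im,
    div_re, ofReal_re, ofReal_im]
  norm_num
  ring

theorem exp_neg_sq_norm_mul_sq_norm_lKer (z w : ℂ) (k : ℕ) :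
    Real.exp (-‖w‖ ^ 2) * ‖lKer z k w‖ ^ 2
      = ((k - 1).factorial : ℝ)⁻¹ * (‖w - z‖ ^ (2 * (k - 1)) * Real.exp (-‖w - z‖ ^ 2)) := by
  have hconj : ‖conj w - conj z‖ = ‖w - z‖ := by rw [← map_sub, RCLike.norm_conj]
  rw [← exp_neg_sq_norm_mul_sq_norm_cexp, lKer, norm_mul, norm_mul, norm_pow, hconj,
    norm_real, Real.norm_of_nonneg (by positivity), pow_mul, mul_pow, mul_pow, div_pow, one_pow,
    Real.sq_sqrt (by positivity)]
  ring

theorem integral_sq_norm_lKer (z : ℂ) (k : ℕ) :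
    ∫ w, ‖lKer z k w‖ ^ 2 ∂gaussMeasure = 1 := by
  simp only [integral_gaussMeasure, smul_eq_mul, div_mul_eq_mul_div,
    exp_neg_sq_norm_mul_sq_norm_lKer, integral_div, integral_const_mul]
  rw [integral_sub_right_eq_self (fun v : ℂ => ‖v‖ ^ (2 * (k - 1)) * Real.exp (-‖v‖ ^ 2)) z,
    integral_norm_pow_mul_exp_neg_sq_norm]
  field_simp

theorem wdz_mul {f g : ℂ → ℂ} {w : ℂ} (hf : DifferentiableAt ℝ f w)
    (hg : DifferentiableAt ℝ g w) :
    wdz (fun v => f v * g v) w = wdz f w * g w + f w * wdz g w := by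
  simp only [wdz, fderiv_fun_mul hf hg, add_apply, smul_apply, smul_eq_mul]
  ring

theorem HasDerivAt.wdz_eq {f : ℂ → ℂ} {f' w : ℂ} (hf : HasDerivAt f f' w) :
    wdz f w = f' := by
  simp only [wdz, (hf.hasFDerivAt.restrictScalars ℝ).fderiv,
    ContinuousLinearMap.coe_restrictScalars', ContinuousLinearMap.toSpanSingleton_apply,
    smul_eq_mul]
  linear_combination (-1 / 2 : ℂ) * f' * I_sq

theorem HasDerivAt.hasFDerivAt_conj {f : ℂ → ℂ} {f' w : ℂ} (hf : HasDerivAt f f' w) :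
    HasFDerivAt (fun v => conj (f v))
      (conjCLE.toContinuousLinearMap.comp
        ((ContinuousLinearMap.toSpanSingleton ℂ f').restrictScalars ℝ)) w :=
  conjCLE.toContinuousLinearMap.hasFDerivAt.comp w (hf.hasFDerivAt.restrictScalars ℝ)

theorem HasDerivAt.wdz_conj {f : ℂ → ℂ} {f' w : ℂ} (hf : HasDerivAt f f' w) :
    wdz (fun v => conj (f v)) w = 0 := by
  simp only [wdz, hf.hasFDerivAt_conj.fderiv, ContinuousLinearMap.comp_apply,
    ContinuousLinearMap.coe_restrictScalars', ContinuousLinearMap.toSpanSingleton_apply,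
    smul_eq_mul, ContinuousLinearEquiv.coe_coe, conjCLE_apply, map_mul, conj_I, map_one]
  linear_combination (1 / 2 : ℂ) * conj f' * I_sq

theorem wdz_lKer (z : ℂ) (k : ℕ) (w : ℂ) :
    wdz (lKer z k) w = conj z * lKer z k w := by
  set c : ℝ := 1 / Real.sqrt (Nat.factorial (k - 1))
  set E : ℂ → ℂ := fun v => exp (v * conj z - (‖z‖ ^ 2 : ℝ) / 2)
  have hpoly : HasDerivAt (fun v => (c : ℂ) * (v - z) ^ (k - 1))
      ((c : ℂ) * ((k - 1 : ℕ) * (w - z) ^ (k - 1 - 1))) w := by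
    simpa using (((hasDerivAt_id w).sub_const z).pow (k - 1)).const_mul (c : ℂ)
  have hE : HasDerivAt E (E w * conj z) w := by
    simpa using (((hasDerivAt_id w).mul_const (conj z)).sub_const _).cexp
  have hlKer : lKer z k = fun v => conj ((c : ℂ) * (v - z) ^ (k - 1)) * E v := by
    funext v
    simp [lKer, E, c, map_sub]
  rw [hlKer, wdz_mul hpoly.hasFDerivAt_conj.differentiableAt
    (hE.hasFDerivAt.restrictScalars ℝ).differentiableAt, hpoly.wdz_conj, hE.wdz_eq]
  ring

theorem lKer_add_two (z : ℂ) (n : ℕ) (w : ℂ) :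
    lKer z (n + 2) w =
      ((1 / Real.sqrt (n + 1) : ℝ) : ℂ) * (conj w - conj z) * lKer z (n + 1) w := by
  have hsqrt : Real.sqrt ((n + 1).factorial) = Real.sqrt (n + 1) * Real.sqrt n.factorial := by
    rw [Nat.factorial_succ, Nat.cast_mul, Nat.cast_succ, Real.sqrt_mul (by positivity)]
  simp only [lKer, show n + 2 - 1 = n + 1 from rfl, Nat.add_sub_cancel]
  rw [hsqrt, pow_succ]
  push_cast
  field_simp

theorem lKer_unit_and_creation_general (z : ℂ) (k : ℕ) :
    (∫ w, ‖lKer z k w‖ ^ 2 ∂gaussMeasure) = 1 ∧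
    (2 ≤ k → ∀ w : ℂ,
      ((1 / Real.sqrt (k - 1) : ℝ) : ℂ) *
        (-(wdz (lKer z (k - 1)) w) + (starRingEnd ℂ) w * lKer z (k - 1) w)
        = lKer z k w) := by
  refine ⟨integral_sq_norm_lKer z k, fun hk w => ?_⟩
  obtain ⟨n, rfl⟩ : ∃ n, k = n + 2 := ⟨k - 2, by omega⟩
  rw [show n + 2 - 1 = n + 1 from rfl, wdz_lKer, lKer_add_two,
    show ((n + 2 : ℕ) : ℝ) - 1 = n + 1 by push_cast; ring]
  ring

/-- l_{z,k} is a unit vector in L²(ℂ,μ) and is obtained from l_{z,k−1} by the normalized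
creation operator (1/√(k−1))(−∂/∂w + w̄). -/
theorem lKer_unit_and_creation (z : ℂ) (k : ℕ) (hk : 1 ≤ k) :
    (∫ w, ‖lKer z k w‖ ^ 2 ∂gaussMeasure) = 1 ∧
    (2 ≤ k → ∀ w : ℂ,
      ((1 / Real.sqrt (k - 1) : ℝ) : ℂ) *
        (-(wdz (lKer z (k - 1)) w) + (starRingEnd ℂ) w * lKer z (k - 1) w)
        = lKer z k w) :=
  lKer_unit_and_creation_general z k
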